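/- arXiv:1003.2244 — 2 statements merged into one kernel-verified Lean document; each statement's English description precedes it below -/
import Mathlib

section
/- Let ds² = du² + h² dv² be a metric in geodesic parallel coordinates, where h satisfies h_{uu} = −K h, h(0,v) = 1, h_u(0,v) = 0, and K is the Gaussian curvature. If K and all its derivatives up to order n vanish along the curve u = 0, then all Christoffel symbols of ds² vanish along u = 0 to order at least n, i.e. ∂_u^j Γ^i_{kl}(0,v) = 0 for 0 ≤ j ≤ n−1 and all i,k,l,v. -/
open Topology
open scoped ContDiff

/-- If `f` vanishes to order `j` at `0` and `f, g` are smooth on an open set containing `0`,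
then the `j`-th derivative of `f * g` vanishes at `0`. -/
private lemma key_mul : ∀ (j : ℕ) (f g : ℝ → ℝ) (s : Set ℝ), IsOpen s → (0:ℝ) ∈ s →
    ContDiffOn ℝ ∞ f s → ContDiffOn ℝ ∞ g s →
    (∀ m ≤ j, iteratedDeriv m f 0 = 0) →
    iteratedDeriv j (fun t => f t * g t) 0 = 0 := by
  intro j
  induction j with
  | zero =>
    intro f g s hs h0 hf hg hv
    have hf0 : f 0 = 0 := by simpa [iteratedDeriv_zero] using hv 0 le_rfl
    simp [iteratedDeriv_zero, hf0]
  | succ j IH =>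
    intro f g s hs h0 hf hg hv
    have hdf : ∀ x ∈ s, DifferentiableAt ℝ f x := fun x hx =>
      (hf.contDiffAt (hs.mem_nhds hx)).differentiableAt (by norm_num)
    have hdg : ∀ x ∈ s, DifferentiableAt ℝ g x := fun x hx =>
      (hg.contDiffAt (hs.mem_nhds hx)).differentiableAt (by norm_num)
    have hev : deriv (fun t => f t * g t) =ᶠ[𝓝 (0:ℝ)]
        fun t => deriv f t * g t + f t * deriv g t := by
      filter_upwards [hs.mem_nhds h0] with t ht
      exact deriv_mul (hdf t ht) (hdg t ht)
    rw [iteratedDeriv_succ', hev.iteratedDeriv_eq j]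
    have hf' : ContDiffOn ℝ ∞ (deriv f) s := hf.deriv_of_isOpen hs (by norm_num)
    have hg' : ContDiffOn ℝ ∞ (deriv g) s := hg.deriv_of_isOpen hs (by norm_num)
    have h1 : iteratedDeriv j (fun t => deriv f t * g t) 0 = 0 := by
      refine IH (deriv f) g s hs h0 hf' hg ?_
      intro m hm
      have := hv (m + 1) (Nat.succ_le_succ hm)
      rwa [iteratedDeriv_succ'] at this
    have h2 : iteratedDeriv j (fun t => f t * deriv g t) 0 = 0 := by
      refine IH f (deriv g) s hs h0 hf hg' ?_
      intro m hm
      exact hv m (le_trans hm (Nat.le_succ j))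
    have hadd : ∀ (k : ℕ) (f1 f2 : ℝ → ℝ) (s : Set ℝ), IsOpen s → (0:ℝ) ∈ s →
        ContDiffOn ℝ ∞ f1 s → ContDiffOn ℝ ∞ f2 s →
        iteratedDeriv k (fun t => f1 t + f2 t) 0 = iteratedDeriv k f1 0 + iteratedDeriv k f2 0 := by
      intro k
      induction k with
      | zero => intro f1 f2 s hs h0 hf1 hf2; simp [iteratedDeriv_zero]
      | succ k IH2 =>
        intro f1 f2 s hs h0 hf1 hf2
        have hev2 : deriv (fun t => f1 t + f2 t) =ᶠ[𝓝 (0:ℝ)]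
            fun t => deriv f1 t + deriv f2 t := by
          filter_upwards [hs.mem_nhds h0] with t ht
          exact deriv_add ((hf1.contDiffAt (hs.mem_nhds ht)).differentiableAt (by norm_num))
            ((hf2.contDiffAt (hs.mem_nhds ht)).differentiableAt (by norm_num))
        rw [iteratedDeriv_succ', hev2.iteratedDeriv_eq k,
          IH2 (deriv f1) (deriv f2) s hs h0 (hf1.deriv_of_isOpen hs (by norm_num))
            (hf2.deriv_of_isOpen hs (by norm_num)),
          iteratedDeriv_succ', iteratedDeriv_succ']
    rw [hadd j _ _ s hs h0 (hf'.mul hg) (hf.mul hg'), h1, h2, add_zero]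

/-- In geodesic parallel coordinates `ds² = du² + h²dv²` with `h_{uu} = -Kh`,
`h(0,v) = 1`, `h_u(0,v) = 0`: if `K` and all its derivatives up to order `n` vanish
along `u = 0`, then the Christoffel symbols `Γ¹₂₂ = -h h_u` and `Γ²₁₂ = h_u/h` vanish
along `u = 0` to order at least `n`, i.e. their `u`-derivatives of order `≤ n - 1`
vanish at `u = 0`. -/
theorem stmt_14 (n : ℕ) (h K : ℝ → ℝ → ℝ)
    (hsmooth : ContDiff ℝ (⊤ : ℕ∞) (Function.uncurry h))
    (hKsmooth : ContDiff ℝ (⊤ : ℕ∞) (Function.uncurry K))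
    (hJacobi : ∀ u v : ℝ, iteratedDeriv 2 (fun t => h t v) u = -(K u v) * h u v)
    (hinit1 : ∀ v : ℝ, h 0 v = 1)
    (hinit2 : ∀ v : ℝ, deriv (fun t => h t v) 0 = 0)
    (hK : ∀ j i : ℕ, j + i ≤ n → ∀ v : ℝ,
      iteratedDeriv j (fun t => iteratedDeriv i (fun s => K t s) v) 0 = 0) :
    ∀ j : ℕ, j < n → ∀ v : ℝ,
      iteratedDeriv j (fun t => -(h t v) * deriv (fun s => h s v) t) 0 = 0 ∧
      iteratedDeriv j (fun t => deriv (fun s => h s v) t / h t v) 0 = 0 := by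
  intro j hj v
  -- one-variable slices
  have hh1 : ContDiff ℝ ∞ (fun t => h t v) :=
    (hsmooth.comp (contDiff_id.prodMk contDiff_const)).of_le (by simp)
  have hK1 : ContDiff ℝ ∞ (fun t => K t v) :=
    (hKsmooth.comp (contDiff_id.prodMk contDiff_const)).of_le (by simp)
  have hfu : ContDiff ℝ ∞ (deriv (fun t => h t v)) :=
    (contDiff_infty_iff_deriv.mp hh1).2
  -- all derivatives of h_u up to order n vanish at 0
  have hA : ∀ m ≤ n, iteratedDeriv m (deriv (fun t => h t v)) 0 = 0 := by
    intro m hm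
    match m with
    | 0 => simpa [iteratedDeriv_zero] using hinit2 v
    | k + 1 =>
      have hdd : deriv (deriv (fun t => h t v)) = fun u => K u v * (-(h u v)) := by
        funext u
        have := hJacobi u v
        rw [iteratedDeriv_succ', iteratedDeriv_one] at this
        rw [this]; ring
      rw [iteratedDeriv_succ', hdd]
      refine key_mul k (fun u => K u v) (fun u => -(h u v)) Set.univ isOpen_univ trivial
        (hK1.contDiffOn) (hh1.neg.contDiffOn) ?_
      intro m' hm'
      have := hK m' 0 (by omega) v
      simpa [iteratedDeriv_zero] using this
  constructor
  · have : (fun t => -(h t v) * deriv (fun s => h s v) t)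
        = fun t => (deriv (fun s => h s v)) t * (-(h t v)) := by
      funext t; ring
    rw [this]
    exact key_mul j _ _ Set.univ isOpen_univ trivial hfu.contDiffOn hh1.neg.contDiffOn
      (fun m hm => hA m (by omega))
  · have hsopen : IsOpen {t : ℝ | h t v ≠ 0} :=
      isOpen_ne.preimage hh1.continuous
    have h0mem : (0:ℝ) ∈ {t : ℝ | h t v ≠ 0} := by
      simp [hinit1 v]
    have : (fun t => deriv (fun s => h s v) t / h t v)
        = fun t => (deriv (fun s => h s v)) t * (h t v)⁻¹ := by
      funext t; rw [div_eq_mul_inv]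
    rw [this]
    exact key_mul j _ _ {t : ℝ | h t v ≠ 0} hsopen h0mem hfu.contDiffOn
      ((hh1.contDiffOn).inv (fun x hx => hx)) (fun m hm => hA m (by omega))
end

section
/- Let L = A∂_{xx} + ∂_{yy} + D∂_x + E∂_y + F be a linear second-order operator with smooth coefficients on ℝ², and let a, b be smooth functions of y alone. Then for all u ∈ C_c^∞(ℝ²), integration by parts gives the identity (au + bu_y, Lu)_{L²} = ∬_{ℝ²} [I₁ u_x² + 2I₂ u_x u_y + I₃ u_y² + I₄ u²], where I₁ = (b'/2 − a)A + (b/2)A_y, I₂ = −(b/2)A_x + (b/2)D, I₃ = −a − b'/2 + bE, and I₄ = (a/2)A_{xx} + a''/2 − (a/2)D_x − (1/2)(aE)_y − (b'/2 − a)F − (b/2)F_y. -/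
open MeasureTheory

/-- Partial derivative in the `x`-direction. -/
noncomputable def pdx18 (f : ℝ × ℝ → ℝ) (p : ℝ × ℝ) : ℝ := fderiv ℝ f p (1, 0)

/-- Partial derivative in the `y`-direction. -/
noncomputable def pdy18 (f : ℝ × ℝ → ℝ) (p : ℝ × ℝ) : ℝ := fderiv ℝ f p (0, 1)

namespace Stmt18Aux

variable {f g : ℝ × ℝ → ℝ} {p : ℝ × ℝ}

lemma le_inf1 : (1 : WithTop ℕ∞) ≤ ((⊤ : ℕ∞) : WithTop ℕ∞) := by exact_mod_cast le_top
lemma le_inf2 : (2 : WithTop ℕ∞) ≤ ((⊤ : ℕ∞) : WithTop ℕ∞) := by decide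
lemma inf_add_one : ((⊤ : ℕ∞) : WithTop ℕ∞) + 1 ≤ ((⊤ : ℕ∞) : WithTop ℕ∞) := by
  exact_mod_cast le_top

lemma pdx_const (c : ℝ) (p : ℝ × ℝ) : pdx18 (fun _ : ℝ × ℝ => c) p = 0 := by simp [pdx18]

lemma pdy_const (c : ℝ) (p : ℝ × ℝ) : pdy18 (fun _ : ℝ × ℝ => c) p = 0 := by simp [pdy18]


lemma pdx_add (hf : DifferentiableAt ℝ f p) (hg : DifferentiableAt ℝ g p) :
    pdx18 (fun q => f q + g q) p = pdx18 f p + pdx18 g p := by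
  simp [pdx18, fderiv_fun_add hf hg]

lemma pdy_add (hf : DifferentiableAt ℝ f p) (hg : DifferentiableAt ℝ g p) :
    pdy18 (fun q => f q + g q) p = pdy18 f p + pdy18 g p := by
  simp [pdy18, fderiv_fun_add hf hg]

lemma pdx_sub (hf : DifferentiableAt ℝ f p) (hg : DifferentiableAt ℝ g p) :
    pdx18 (fun q => f q - g q) p = pdx18 f p - pdx18 g p := by
  simp [pdx18, fderiv_fun_sub hf hg]

lemma pdy_sub (hf : DifferentiableAt ℝ f p) (hg : DifferentiableAt ℝ g p) :
    pdy18 (fun q => f q - g q) p = pdy18 f p - pdy18 g p := by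
  simp [pdy18, fderiv_fun_sub hf hg]

lemma pdx_mul (hf : DifferentiableAt ℝ f p) (hg : DifferentiableAt ℝ g p) :
    pdx18 (fun q => f q * g q) p = pdx18 f p * g p + f p * pdx18 g p := by
  simp [pdx18, fderiv_fun_mul hf hg]; ring

lemma pdy_mul (hf : DifferentiableAt ℝ f p) (hg : DifferentiableAt ℝ g p) :
    pdy18 (fun q => f q * g q) p = pdy18 f p * g p + f p * pdy18 g p := by
  simp [pdy18, fderiv_fun_mul hf hg]; ring

lemma pdx_const_mul (c : ℝ) (hf : DifferentiableAt ℝ f p) :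
    pdx18 (fun q => c * f q) p = c * pdx18 f p := by
  simp [pdx18, fderiv_const_mul hf]

lemma pdy_const_mul (c : ℝ) (hf : DifferentiableAt ℝ f p) :
    pdy18 (fun q => c * f q) p = c * pdy18 f p := by
  simp [pdy18, fderiv_const_mul hf]

lemma fderiv_snd_comp {a : ℝ → ℝ} (ha : Differentiable ℝ a) (p : ℝ × ℝ) :
    fderiv ℝ (fun q : ℝ × ℝ => a q.2) p
      = (fderiv ℝ a p.2).comp (ContinuousLinearMap.snd ℝ ℝ ℝ) := by
  rw [show (fun q : ℝ × ℝ => a q.2) = a ∘ Prod.snd from rfl,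
    fderiv_comp p (ha p.2) differentiableAt_snd, fderiv_snd]

lemma pdx_snd {a : ℝ → ℝ} (ha : Differentiable ℝ a) (p : ℝ × ℝ) :
    pdx18 (fun q : ℝ × ℝ => a q.2) p = 0 := by
  simp [pdx18, fderiv_snd_comp ha]

lemma pdy_snd {a : ℝ → ℝ} (ha : Differentiable ℝ a) (p : ℝ × ℝ) :
    pdy18 (fun q : ℝ × ℝ => a q.2) p = deriv a p.2 := by
  simp [pdy18, fderiv_snd_comp ha, fderiv_apply_one_eq_deriv]

lemma contDiff_pdx (hf : ContDiff ℝ (⊤ : ℕ∞) f) : ContDiff ℝ (⊤ : ℕ∞) (pdx18 f) :=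
  (hf.fderiv_right inf_add_one).clm_apply contDiff_const

lemma contDiff_pdy (hf : ContDiff ℝ (⊤ : ℕ∞) f) : ContDiff ℝ (⊤ : ℕ∞) (pdy18 f) :=
  (hf.fderiv_right inf_add_one).clm_apply contDiff_const

lemma pdx_zero_of (hp : p ∉ tsupport f) : pdx18 f p = 0 := by
  have h : fderiv ℝ f p = 0 := by
    by_contra h
    exact hp (support_fderiv_subset ℝ (by simpa [Function.mem_support] using h))
  simp [pdx18, h]

lemma pdy_zero_of (hp : p ∉ tsupport f) : pdy18 f p = 0 := by
  have h : fderiv ℝ f p = 0 := by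
    by_contra h
    exact hp (support_fderiv_subset ℝ (by simpa [Function.mem_support] using h))
  simp [pdy18, h]

lemma hcs_pdx (hs : HasCompactSupport f) : HasCompactSupport (pdx18 f) :=
  hs.fderiv ℝ |>.comp_left (g := fun L : (ℝ × ℝ) →L[ℝ] ℝ => L (1, 0)) rfl

lemma hcs_pdy (hs : HasCompactSupport f) : HasCompactSupport (pdy18 f) :=
  hs.fderiv ℝ |>.comp_left (g := fun L : (ℝ × ℝ) →L[ℝ] ℝ => L (0, 1)) rfl

lemma integral_deriv_zero {f : ℝ → ℝ} (hf : ContDiff ℝ 1 f) (hs : HasCompactSupport f) :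
    ∫ x : ℝ, deriv f x = 0 := by
  have hi : Integrable (deriv f) :=
    (hf.continuous_deriv le_rfl).integrable_of_hasCompactSupport hs.deriv
  rw [← intervalIntegral.integral_Iic_add_Ioi (b := (0:ℝ)) hi.integrableOn hi.integrableOn,
    HasCompactSupport.integral_Iic_deriv_eq hf hs 0,
    HasCompactSupport.integral_Ioi_deriv_eq hf hs 0]
  ring

lemma slice_x_compactSupport (hs : HasCompactSupport f) (y : ℝ) :
    HasCompactSupport (fun t => f (t, y)) := by
  apply HasCompactSupport.intro (hs.isCompact.image continuous_fst)
  intro t ht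
  by_contra h
  exact ht ⟨(t, y), subset_tsupport _ h, rfl⟩

lemma slice_y_compactSupport (hs : HasCompactSupport f) (x : ℝ) :
    HasCompactSupport (fun t => f (x, t)) := by
  apply HasCompactSupport.intro (hs.isCompact.image continuous_snd)
  intro t ht
  by_contra h
  exact ht ⟨(x, t), subset_tsupport _ h, rfl⟩

lemma integral_pdx_zero (hf : ContDiff ℝ (⊤ : ℕ∞) f) (hs : HasCompactSupport f) :
    ∫ p : ℝ × ℝ, pdx18 f p = 0 := by
  have hint : Integrable (pdx18 f) (volume.prod volume) := by
    rw [← Measure.volume_eq_prod ℝ ℝ]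
    exact (contDiff_pdx hf).continuous.integrable_of_hasCompactSupport (hcs_pdx hs)
  have key : ∀ y : ℝ, (∫ x : ℝ, pdx18 f (x, y)) = 0 := by
    intro y
    have hfy : ContDiff ℝ 1 (fun t : ℝ => f (t, y)) :=
      (hf.of_le le_inf1).comp (contDiff_id.prodMk contDiff_const)
    have hd : ∀ x : ℝ, deriv (fun t => f (t, y)) x = pdx18 f (x, y) := by
      intro x
      have h1 : HasFDerivAt f (fderiv ℝ f (x, y)) (x, y) :=
        (hf.differentiable (by simp) (x, y)).hasFDerivAt
      have h2 : HasDerivAt (fun t : ℝ => (t, y)) ((1 : ℝ), (0 : ℝ)) x := by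
        simpa using (hasDerivAt_id x).prodMk (hasDerivAt_const x y)
      have h3 := h1.comp_hasDerivAt x h2
      simpa [pdx18, Function.comp_def] using h3.deriv
    calc (∫ x : ℝ, pdx18 f (x, y)) = ∫ x : ℝ, deriv (fun t => f (t, y)) x := by
          simp_rw [hd]
      _ = 0 := integral_deriv_zero hfy (slice_x_compactSupport hs y)
  calc (∫ p : ℝ × ℝ, pdx18 f p) = ∫ p : ℝ × ℝ, pdx18 f p ∂(volume.prod volume) := by
        rw [← Measure.volume_eq_prod ℝ ℝ]
    _ = ∫ y : ℝ, ∫ x : ℝ, pdx18 f (x, y) := by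
        rw [integral_prod _ hint]
        exact integral_integral_swap (f := fun x y => pdx18 f (x, y)) hint
    _ = 0 := by simp [key]

lemma integral_pdy_zero (hf : ContDiff ℝ (⊤ : ℕ∞) f) (hs : HasCompactSupport f) :
    ∫ p : ℝ × ℝ, pdy18 f p = 0 := by
  have hint : Integrable (pdy18 f) (volume.prod volume) := by
    rw [← Measure.volume_eq_prod ℝ ℝ]
    exact (contDiff_pdy hf).continuous.integrable_of_hasCompactSupport (hcs_pdy hs)
  have key : ∀ x : ℝ, (∫ y : ℝ, pdy18 f (x, y)) = 0 := by
    intro x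
    have hfx : ContDiff ℝ 1 (fun t : ℝ => f (x, t)) :=
      (hf.of_le le_inf1).comp (contDiff_const.prodMk contDiff_id)
    have hd : ∀ y : ℝ, deriv (fun t => f (x, t)) y = pdy18 f (x, y) := by
      intro y
      have h1 : HasFDerivAt f (fderiv ℝ f (x, y)) (x, y) :=
        (hf.differentiable (by simp) (x, y)).hasFDerivAt
      have h2 : HasDerivAt (fun t : ℝ => (x, t)) ((0 : ℝ), (1 : ℝ)) y := by
        simpa using (hasDerivAt_const y x).prodMk (hasDerivAt_id y)
      have h3 := h1.comp_hasDerivAt y h2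
      simpa [pdy18, Function.comp_def] using h3.deriv
    calc (∫ y : ℝ, pdy18 f (x, y)) = ∫ y : ℝ, deriv (fun t => f (x, t)) y := by
          simp_rw [hd]
      _ = 0 := integral_deriv_zero hfx (slice_y_compactSupport hs x)
  calc (∫ p : ℝ × ℝ, pdy18 f p) = ∫ p : ℝ × ℝ, pdy18 f p ∂(volume.prod volume) := by
        rw [← Measure.volume_eq_prod ℝ ℝ]
    _ = ∫ x : ℝ, ∫ y : ℝ, pdy18 f (x, y) := integral_prod _ hint
    _ = 0 := by simp [key]

lemma pdx_pdy_symm (hf : ContDiff ℝ (⊤ : ℕ∞) f) (p : ℝ × ℝ) :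
    pdy18 (pdx18 f) p = pdx18 (pdy18 f) p := by
  have hsym : IsSymmSndFDerivAt ℝ f p := hf.contDiffAt.isSymmSndFDerivAt (by simpa [minSmoothness_of_isRCLikeNormedField] using le_inf2)
  have hdf : DifferentiableAt ℝ (fderiv ℝ f) p :=
    ((hf.fderiv_right inf_add_one).differentiable (by simp)) p
  have h1 : ∀ v : ℝ × ℝ, fderiv ℝ (fun q => fderiv ℝ f q v) p
      = (fderiv ℝ (fderiv ℝ f) p).flip v := by
    intro v
    have := fderiv_clm_apply hdf (differentiableAt_const v)
    simpa using this
  have e1 : pdy18 (pdx18 f) p = fderiv ℝ (fderiv ℝ f) p ((0:ℝ),(1:ℝ)) ((1:ℝ),(0:ℝ)) := by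
    show fderiv ℝ (fun q => fderiv ℝ f q ((1:ℝ),(0:ℝ))) p ((0:ℝ),(1:ℝ)) = _
    rw [h1]; rfl
  have e2 : pdx18 (pdy18 f) p = fderiv ℝ (fderiv ℝ f) p ((1:ℝ),(0:ℝ)) ((0:ℝ),(1:ℝ)) := by
    show fderiv ℝ (fun q => fderiv ℝ f q ((0:ℝ),(1:ℝ))) p ((1:ℝ),(0:ℝ)) = _
    rw [h1]; rfl
  rw [e1, e2, hsym.eq]

end Stmt18Aux

open Stmt18Aux in
/-- Integration-by-parts identity underlying the basic energy estimate (Lemma 2.1): for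
`L = A∂_{xx} + ∂_{yy} + D∂_x + E∂_y + F` and multipliers `a(y)`, `b(y)`, for all
`u ∈ C_c^∞(ℝ²)`:
`(au + bu_y, Lu)_{L²} = ∬ I₁u_x² + 2I₂u_xu_y + I₃u_y² + I₄u²` with
`I₁ = (b'/2 - a)A + (b/2)A_y`, `I₂ = -(b/2)A_x + (b/2)D`, `I₃ = -a - b'/2 + bE`,
`I₄ = (a/2)A_{xx} + a''/2 - (a/2)D_x - (1/2)(aE)_y - (b'/2 - a)F - (b/2)F_y`. -/
theorem stmt_18 (A D E F : ℝ × ℝ → ℝ) (a b : ℝ → ℝ)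
    (hA : ContDiff ℝ (⊤ : ℕ∞) A) (hD : ContDiff ℝ (⊤ : ℕ∞) D) (hE : ContDiff ℝ (⊤ : ℕ∞) E)
    (hF : ContDiff ℝ (⊤ : ℕ∞) F) (ha : ContDiff ℝ (⊤ : ℕ∞) a) (hb : ContDiff ℝ (⊤ : ℕ∞) b)
    (u : ℝ × ℝ → ℝ) (hu : ContDiff ℝ (⊤ : ℕ∞) u) (hus : HasCompactSupport u) :
    ∫ p : ℝ × ℝ, (a p.2 * u p + b p.2 * pdy18 u p) *
        (A p * pdx18 (pdx18 u) p + pdy18 (pdy18 u) p + D p * pdx18 u p +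
          E p * pdy18 u p + F p * u p)
    = ∫ p : ℝ × ℝ,
        ((deriv b p.2 / 2 - a p.2) * A p + (b p.2 / 2) * pdy18 A p) * (pdx18 u p) ^ 2
      + 2 * (-(b p.2 / 2) * pdx18 A p + (b p.2 / 2) * D p) * pdx18 u p * pdy18 u p
      + (-(a p.2) - deriv b p.2 / 2 + b p.2 * E p) * (pdy18 u p) ^ 2
      + ((a p.2 / 2) * pdx18 (pdx18 A) p + deriv (deriv a) p.2 / 2
          - (a p.2 / 2) * pdx18 D p
          - (1 / 2) * pdy18 (fun q => a q.2 * E q) p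
          - (deriv b p.2 / 2 - a p.2) * F p - (b p.2 / 2) * pdy18 F p) * (u p) ^ 2 := by
  -- differentiability facts for `fun_prop`
  have hA' : Differentiable ℝ A := hA.differentiable (by simp)
  have hD' : Differentiable ℝ D := hD.differentiable (by simp)
  have hE' : Differentiable ℝ E := hE.differentiable (by simp)
  have hF' : Differentiable ℝ F := hF.differentiable (by simp)
  have hu' : Differentiable ℝ u := hu.differentiable (by simp)
  have ha' : Differentiable ℝ a := ha.differentiable (by simp)
  have hb' : Differentiable ℝ b := hb.differentiable (by simp)
  have hda : ContDiff ℝ (⊤ : ℕ∞) (deriv a) := (contDiff_infty_iff_deriv.mp (ha.of_le (by simp))).2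
  have hda' : Differentiable ℝ (deriv a) := hda.differentiable (by simp)
  have hA9 : ContDiff ℝ (⊤ : ℕ∞) A := hA.of_le (by simp)
  have hD9 : ContDiff ℝ (⊤ : ℕ∞) D := hD.of_le (by simp)
  have hE9 : ContDiff ℝ (⊤ : ℕ∞) E := hE.of_le (by simp)
  have hF9 : ContDiff ℝ (⊤ : ℕ∞) F := hF.of_le (by simp)
  have hu9 : ContDiff ℝ (⊤ : ℕ∞) u := hu.of_le (by simp)
  have ha9 : ContDiff ℝ (⊤ : ℕ∞) a := ha.of_le (by simp)
  have hb9 : ContDiff ℝ (⊤ : ℕ∞) b := hb.of_le (by simp)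
  have huxsm : ContDiff ℝ (⊤ : ℕ∞) (pdx18 u) := contDiff_pdx hu9
  have huysm : ContDiff ℝ (⊤ : ℕ∞) (pdy18 u) := contDiff_pdy hu9
  have hAxsm : ContDiff ℝ (⊤ : ℕ∞) (pdx18 A) := contDiff_pdx hA9
  have hux' : Differentiable ℝ (pdx18 u) := huxsm.differentiable (by simp)
  have huy' : Differentiable ℝ (pdy18 u) := huysm.differentiable (by simp)
  have hAx' : Differentiable ℝ (pdx18 A) := hAxsm.differentiable (by simp)
  -- instantiated leaf lemmas
  have eax : ∀ p : ℝ × ℝ, pdx18 (fun q : ℝ × ℝ => a q.2) p = 0 := pdx_snd ha'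
  have eay : ∀ p : ℝ × ℝ, pdy18 (fun q : ℝ × ℝ => a q.2) p = deriv a p.2 := pdy_snd ha'
  have ebx : ∀ p : ℝ × ℝ, pdx18 (fun q : ℝ × ℝ => b q.2) p = 0 := pdx_snd hb'
  have eby : ∀ p : ℝ × ℝ, pdy18 (fun q : ℝ × ℝ => b q.2) p = deriv b p.2 := pdy_snd hb'
  have eday : ∀ p : ℝ × ℝ, pdy18 (fun q : ℝ × ℝ => deriv a q.2) p = deriv (deriv a) p.2 :=
    pdy_snd hda'
  -- the flux functions
  set P : ℝ × ℝ → ℝ := fun q =>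
      a q.2 * A q * u q * pdx18 u q
      - (1/2) * (a q.2 * pdx18 A q * u q * u q)
      + b q.2 * A q * pdx18 u q * pdy18 u q
      + (1/2) * (a q.2 * D q * u q * u q) with hPdef
  set Q : ℝ × ℝ → ℝ := fun q =>
      a q.2 * u q * pdy18 u q
      + (1/2) * (b q.2 * pdy18 u q * pdy18 u q)
      + (1/2) * (a q.2 * E q * u q * u q)
      + (1/2) * (b q.2 * F q * u q * u q)
      - (1/2) * (b q.2 * A q * pdx18 u q * pdx18 u q)
      - (1/2) * (deriv a q.2 * u q * u q) with hQdef
  have hPsm : ContDiff ℝ (⊤ : ℕ∞) P := by rw [hPdef]; fun_prop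
  have hQsm : ContDiff ℝ (⊤ : ℕ∞) Q := by rw [hQdef]; fun_prop
  have hPcs : HasCompactSupport P := by
    apply HasCompactSupport.intro hus.isCompact
    intro p hp
    have h1 : u p = 0 := image_eq_zero_of_notMem_tsupport hp
    have h2 : pdx18 u p = 0 := pdx_zero_of hp
    have h3 : pdy18 u p = 0 := pdy_zero_of hp
    simp [hPdef, h1, h2, h3]
  have hQcs : HasCompactSupport Q := by
    apply HasCompactSupport.intro hus.isCompact
    intro p hp
    have h1 : u p = 0 := image_eq_zero_of_notMem_tsupport hp
    have h2 : pdx18 u p = 0 := pdx_zero_of hp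
    have h3 : pdy18 u p = 0 := pdy_zero_of hp
    simp [hQdef, h1, h2, h3]
  -- the pointwise divergence identity
  have key : ∀ p : ℝ × ℝ, (a p.2 * u p + b p.2 * pdy18 u p) *
        (A p * pdx18 (pdx18 u) p + pdy18 (pdy18 u) p + D p * pdx18 u p +
          E p * pdy18 u p + F p * u p)
      = (((deriv b p.2 / 2 - a p.2) * A p + (b p.2 / 2) * pdy18 A p) * (pdx18 u p) ^ 2
      + 2 * (-(b p.2 / 2) * pdx18 A p + (b p.2 / 2) * D p) * pdx18 u p * pdy18 u p
      + (-(a p.2) - deriv b p.2 / 2 + b p.2 * E p) * (pdy18 u p) ^ 2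
      + ((a p.2 / 2) * pdx18 (pdx18 A) p + deriv (deriv a) p.2 / 2
          - (a p.2 / 2) * pdx18 D p
          - (1 / 2) * pdy18 (fun q => a q.2 * E q) p
          - (deriv b p.2 / 2 - a p.2) * F p - (b p.2 / 2) * pdy18 F p) * (u p) ^ 2)
      + (pdx18 P p + pdy18 Q p) := by
    intro p
    have hsymm : pdy18 (pdx18 u) p = pdx18 (pdy18 u) p := pdx_pdy_symm hu9 p
    simp (disch := fun_prop) only [hPdef, hQdef, pdx_add, pdx_sub, pdx_mul, pdx_const_mul,
      pdy_add, pdy_sub, pdy_mul, pdy_const_mul, eax, eay, ebx, eby, eday, pdx_const, pdy_const]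
    rw [hsymm]
    ring
  -- integrability
  have hiP : Integrable (pdx18 P) :=
    (contDiff_pdx hPsm).continuous.integrable_of_hasCompactSupport (hcs_pdx hPcs)
  have hiQ : Integrable (pdy18 Q) :=
    (contDiff_pdy hQsm).continuous.integrable_of_hasCompactSupport (hcs_pdy hQcs)
  have haE : ContDiff ℝ (⊤ : ℕ∞) (fun q : ℝ × ℝ => a q.2 * E q) := by fun_prop
  have hc1 : Continuous (pdy18 A) := (contDiff_pdy hA9).continuous
  have hc2 : Continuous (pdx18 A) := hAxsm.continuous
  have hc3 : Continuous (pdx18 (pdx18 A)) := (contDiff_pdx hAxsm).continuous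
  have hc4 : Continuous (pdx18 D) := (contDiff_pdx hD9).continuous
  have hc5 : Continuous (pdy18 F) := (contDiff_pdy hF9).continuous
  have hc6 : Continuous (pdy18 (fun q : ℝ × ℝ => a q.2 * E q)) := (contDiff_pdy haE).continuous
  have hc7 : Continuous (pdx18 u) := huxsm.continuous
  have hc8 : Continuous (pdy18 u) := huysm.continuous
  have hc9 : Continuous (deriv b) := hb9.continuous_deriv le_inf1
  have hc10 : Continuous (deriv (deriv a)) := hda.continuous_deriv le_inf1
  have hc11 : Continuous a := ha9.continuous
  have hc12 : Continuous b := hb9.continuous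
  have hc13 : Continuous A := hA9.continuous
  have hc14 : Continuous D := hD9.continuous
  have hc15 : Continuous E := hE9.continuous
  have hc16 : Continuous F := hF9.continuous
  have hc17 : Continuous u := hu9.continuous
  have hRc : Continuous (fun p : ℝ × ℝ =>
        ((deriv b p.2 / 2 - a p.2) * A p + (b p.2 / 2) * pdy18 A p) * (pdx18 u p) ^ 2
      + 2 * (-(b p.2 / 2) * pdx18 A p + (b p.2 / 2) * D p) * pdx18 u p * pdy18 u p
      + (-(a p.2) - deriv b p.2 / 2 + b p.2 * E p) * (pdy18 u p) ^ 2
      + ((a p.2 / 2) * pdx18 (pdx18 A) p + deriv (deriv a) p.2 / 2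
          - (a p.2 / 2) * pdx18 D p
          - (1 / 2) * pdy18 (fun q => a q.2 * E q) p
          - (deriv b p.2 / 2 - a p.2) * F p - (b p.2 / 2) * pdy18 F p) * (u p) ^ 2) := by
    fun_prop
  have hiR : Integrable (fun p : ℝ × ℝ =>
        ((deriv b p.2 / 2 - a p.2) * A p + (b p.2 / 2) * pdy18 A p) * (pdx18 u p) ^ 2
      + 2 * (-(b p.2 / 2) * pdx18 A p + (b p.2 / 2) * D p) * pdx18 u p * pdy18 u p
      + (-(a p.2) - deriv b p.2 / 2 + b p.2 * E p) * (pdy18 u p) ^ 2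
      + ((a p.2 / 2) * pdx18 (pdx18 A) p + deriv (deriv a) p.2 / 2
          - (a p.2 / 2) * pdx18 D p
          - (1 / 2) * pdy18 (fun q => a q.2 * E q) p
          - (deriv b p.2 / 2 - a p.2) * F p - (b p.2 / 2) * pdy18 F p) * (u p) ^ 2) := by
    apply hRc.integrable_of_hasCompactSupport
    apply HasCompactSupport.intro hus.isCompact
    intro p hp
    have h1 : u p = 0 := image_eq_zero_of_notMem_tsupport hp
    have h2 : pdx18 u p = 0 := pdx_zero_of hp
    have h3 : pdy18 u p = 0 := pdy_zero_of hp
    simp [h1, h2, h3]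
  have hiPQ : Integrable (fun p : ℝ × ℝ => pdx18 P p + pdy18 Q p) := hiP.add hiQ
  rw [integral_congr_ae (Filter.Eventually.of_forall key),
    integral_add hiR hiPQ, integral_add hiP hiQ,
    integral_pdx_zero hPsm hPcs, integral_pdy_zero hQsm hQcs]
  simp
end
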